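/- Let a, b : Fin n → A be permutation-equivalent words. Then the canonical permutation σ_{a,b} is invertible with inverse σ_{b,a}, i.e., σ_{a,b} ∘ σ_{b,a} = id and σ_{b,a} ∘ σ_{a,b} = id. -/
import Mathlib


variable {A : Type*} [DecidableEq A]

/-- The finite set of positions at which the letter `x` occurs in the word `a`. -/
def occFinset {n : ℕ} (a : Fin n → A) (x : A) : Finset (Fin n) :=
  Finset.univ.filter (fun i => a i = x)

/-- The number of occurrences of the letter `x` in the word `a`. -/
def cnt {n : ℕ} (a : Fin n → A) (x : A) : ℕ := (occFinset a x).card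

/-- The position of the `j`-th occurrence (in increasing order) of the letter `x`
in the word `a`. -/
def pos {n : ℕ} (a : Fin n → A) (x : A) (j : Fin (cnt a x)) : Fin n :=
  ((occFinset a x).orderIsoOfFin rfl j : Fin n)

/-- The occurrence index of the position `i` among the increasingly enumerated
occurrences of the letter `a i` in the word `a`. -/
def occ {n : ℕ} (a : Fin n → A) (i : Fin n) : Fin (cnt a (a i)) :=
  ((occFinset a (a i)).orderIsoOfFin rfl).symm ⟨i, by simp [occFinset]⟩

lemma apply_pos {n : ℕ} (a : Fin n → A) (x : A) (j : Fin (cnt a x)) :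
    a (pos a x j) = x := by
  have h := ((occFinset a x).orderIsoOfFin rfl j).2
  simp only [occFinset, Finset.mem_filter] at h
  exact h.2

/-- The canonical permutation `σ_{a,b}` associated with two words having the same
occurrence counts: `σ_{a,b}(i) = pos_{b, a i}(occ_a i)`. -/
def canonPerm {n : ℕ} (a b : Fin n → A) (h : ∀ x, cnt a x = cnt b x) (i : Fin n) : Fin n :=
  pos b (a i) (Fin.cast (h (a i)) (occ a i))

/-- The map induced by a word morphism `φ : a → b` (i.e. `a = b ∘ φ`) on the
occurrence sets of the letter `x`: `⌊φ⌋_x (j) = occ_b (φ (pos_{a,x} j))`. -/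
def flr {m n : ℕ} (a : Fin m → A) (b : Fin n → A) (φ : Fin m → Fin n)
    (hφ : a = b ∘ φ) (x : A) (j : Fin (cnt a x)) : Fin (cnt b x) :=
  Fin.cast (congrArg (cnt b) ((congrFun hφ (pos a x j)).symm.trans (apply_pos a x j)))
    (occ b (φ (pos a x j)))

lemma pos_occ' {n : ℕ} (a : Fin n → A) (i : Fin n) : pos a (a i) (occ a i) = i := by
  unfold pos occ
  rw [OrderIso.apply_symm_apply]

lemma pos_congr' {n : ℕ} (a : Fin n → A) {x y : A} (h : x = y) (j : Fin (cnt a x)) :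
    pos a x j = pos a y (Fin.cast (congrArg (cnt a) h) j) := by
  subst h; rfl

lemma occ_pos' {n : ℕ} (a : Fin n → A) (x : A) (j : Fin (cnt a x)) :
    occ a (pos a x j) = Fin.cast (congrArg (cnt a) (apply_pos a x j).symm) j := by
  unfold occ
  erw [OrderIso.symm_apply_eq]
  apply Subtype.ext
  show (pos a x j : Fin n) = (pos a (a (pos a x j)) (Fin.cast _ j) : Fin n)
  symm
  rw [pos_congr' a (apply_pos a x j) (Fin.cast _ j)]
  congr 1

lemma canonPerm_key {n : ℕ} (a b : Fin n → A) (hab : ∀ x, cnt a x = cnt b x)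
    (hba : ∀ x, cnt b x = cnt a x) :
    canonPerm a b hab ∘ canonPerm b a hba = id := by
  funext i
  simp only [Function.comp_apply, id_eq, canonPerm]
  rw [occ_pos']
  rw [pos_congr' b (apply_pos a (b i) _)]
  have : (Fin.cast (congrArg (cnt b) (apply_pos a (b i) (Fin.cast (hba (b i)) (occ b i))))
      (Fin.cast (hab _) (Fin.cast (congrArg (cnt a) (apply_pos a (b i) _).symm)
        (Fin.cast (hba (b i)) (occ b i))))) = occ b i := by
    apply Fin.ext; simp
  rw [this, pos_occ']

/-- `σ_{a,b}` is invertible with inverse `σ_{b,a}`. -/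
theorem canonPerm_inverse {n : ℕ} (a b : Fin n → A)
    (hab : ∀ x, cnt a x = cnt b x) :
    canonPerm a b hab ∘ canonPerm b a (fun x => (hab x).symm) = id ∧
      canonPerm b a (fun x => (hab x).symm) ∘ canonPerm a b hab = id := by
  exact ⟨canonPerm_key a b hab _, canonPerm_key b a (fun x => (hab x).symm) hab⟩
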